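/- arXiv:2101.00681 — 2 statements merged into one kernel-verified Lean document; each statement's English description precedes it below -/
import Mathlib

section
/- At the single-species equilibrium (1, 0, 0) of the three-species segregation kinetics, the Jacobian matrix (the matrix of partial derivatives ∂Fᵢ/∂mⱼ) equals !![−1, −3, −3; 0, −2, 0; 0, 0, −2], and its characteristic polynomial equals (X + 1)(X + 2)²; in particular all eigenvalues are negative real numbers. -/
open Polynomial Matrix

/-! The Jacobian of `m ↦ mᵢ (1 - (a m)ᵢ)` at `x` is `diag (1 - a x) - diag x * a`. At the vertex
`x = e₀` only the first row of `diag x * a` survives, so the Jacobian is upper triangular and its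
eigenvalues can be read off the diagonal: `1 - a₀₀ = -1` and `1 - a₀ⱼ = -2` for `j ≠ 0`. -/

section

variable {ι : Type*} [Fintype ι]

theorem hasFDerivAt_apply_mul_one_sub_sum (a : Matrix ι ι ℝ) (i : ι) (x : ι → ℝ) :
    HasFDerivAt (fun m : ι → ℝ => m i * (1 - ∑ j, a i j * m j))
      (x i • -(∑ j, a i j • ContinuousLinearMap.proj (R := ℝ) (φ := fun _ : ι => ℝ) j)
        + (1 - ∑ j, a i j * x j) • ContinuousLinearMap.proj i) x := by
  have hsum : HasFDerivAt (fun m : ι → ℝ => ∑ j, a i j * m j)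
      (∑ j, a i j • ContinuousLinearMap.proj (R := ℝ) (φ := fun _ : ι => ℝ) j) x := by
    convert (∑ j, a i j • ContinuousLinearMap.proj (R := ℝ) (φ := fun _ : ι => ℝ) j).hasFDerivAt
      using 1
    ext m
    simp
  exact (hasFDerivAt_apply i x).mul (hsum.const_sub 1)

theorem jacobian_apply_mul_one_sub_sum [DecidableEq ι] (a : Matrix ι ι ℝ) (x : ι → ℝ) :
    Matrix.of (fun i j => fderiv ℝ (fun m : ι → ℝ => m i * (1 - ∑ k, a i k * m k)) x
      (Pi.single j 1)) = diagonal (1 - a *ᵥ x) - diagonal x * a := by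
  ext i j
  rw [of_apply, (hasFDerivAt_apply_mul_one_sub_sum a i x).fderiv]
  simp only [smul_neg, _root_.add_apply, _root_.neg_apply, _root_.smul_apply, _root_.sum_apply,
    ContinuousLinearMap.proj_apply, Pi.single_apply, smul_eq_mul, mul_ite, mul_one, mul_zero,
    Finset.sum_ite_eq', Finset.mem_univ, ↓reduceIte, Matrix.sub_apply, diagonal_apply,
    Pi.sub_apply, Pi.one_apply, mulVec, dotProduct, diagonal_mul]
  ring

end

theorem segregation_jacobian_at_single_species (a : Matrix (Fin 3) (Fin 3) ℝ)
    (ha : ∀ i j, a i j = if i = j then 1 else 3) :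
    diagonal (1 - a *ᵥ ![1, 0, 0]) - diagonal ![1, 0, 0] * a
      = !![-1, -3, -3; 0, -2, 0; 0, 0, -2] := by
  ext i j
  fin_cases i <;> fin_cases j <;> simp [mulVec, dotProduct, Fin.sum_univ_three, ha] <;> norm_num

theorem charpoly_segregation_jacobian :
    (!![-1, -3, -3; 0, -2, 0; 0, 0, -2] : Matrix (Fin 3) (Fin 3) ℝ).charpoly
      = (X + 1) * (X + 2) ^ 2 := by
  rw [charpoly_of_isUpperTriangular]
  · simp only [of_apply, cons_val', cons_val_fin_one, Fin.prod_univ_three, cons_val_zero,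
      cons_val_one, cons_val, map_neg, map_one, map_ofNat, sub_neg_eq_add]
    ring
  · intro i j hji
    fin_cases i <;> fin_cases j <;> simp_all

/-- At the single-species equilibrium (1,0,0) of the three-species segregation kinetics
(a_{ii} = 1, a_{ij} = 3 for i ≠ j), the Jacobian matrix of partial derivatives equals
!![−1, −3, −3; 0, −2, 0; 0, 0, −2], its characteristic polynomial is (X + 1)(X + 2)²,
and all (real) eigenvalues are negative. -/
theorem segregation_jacobian_single_species_equilibrium
    (a : Fin 3 → Fin 3 → ℝ) (ha : ∀ i j, a i j = if i = j then 1 else 3)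
    (F : Fin 3 → (Fin 3 → ℝ) → ℝ)
    (hF : ∀ i m, F i m = m i * (1 - ∑ j, a i j * m j))
    (m₀ : Fin 3 → ℝ) (hm₀ : m₀ = ![1, 0, 0])
    (J : Matrix (Fin 3) (Fin 3) ℝ)
    (hJ : ∀ i j, J i j = fderiv ℝ (F i) m₀ (Pi.single j 1)) :
    J = !![-1, -3, -3; 0, -2, 0; 0, 0, -2] ∧
    J.charpoly = (X + 1) * (X + 2) ^ 2 ∧
    ∀ μ : ℝ, μ ∈ spectrum ℝ J → μ < 0 := by
  have hJeq : J = !![-1, -3, -3; 0, -2, 0; 0, 0, -2] :=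
    calc J = diagonal (1 - of a *ᵥ m₀) - diagonal m₀ * of a := by
          rw [← jacobian_apply_mul_one_sub_sum]
          ext i j
          rw [hJ, of_apply, funext (hF i)]
          rfl
      _ = _ := hm₀ ▸ segregation_jacobian_at_single_species (of a) ha
  have hchar : J.charpoly = (X + 1) * (X + 2) ^ 2 := hJeq ▸ charpoly_segregation_jacobian
  refine ⟨hJeq, hchar, fun μ hμ => ?_⟩
  have hroot : (μ + 1) * (μ + 2) ^ 2 = 0 := by
    simpa [hchar] using (mem_spectrum_iff_isRoot_charpoly.mp hμ).eq_zero
  rcases mul_eq_zero.mp hroot with h | h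
  · linarith
  · linarith [pow_eq_zero_iff two_ne_zero |>.mp h]
end

section
/- At the coexistence equilibrium (1/7, 1/7, 1/7) of the three-species segregation kinetics, the Jacobian matrix equals the 3×3 matrix with diagonal entries −1/7 and off-diagonal entries −3/7, its characteristic polynomial equals (X + 1)(X − 2/7)², and in particular 2/7 is a positive eigenvalue, so this equilibrium is not linearly stable. -/
/-!
At the coexistence point the bracket `1 - ∑ⱼ aᵢⱼ mⱼ` vanishes, so the product rule leaves only
the Jacobian `-diag(m₀) A = -A / 7`. The matrix `A = 3 𝟙𝟙ᵀ - 2 I` has eigenvalue `7` on `(1, 1, 1)`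
and `-2` on its orthogonal complement, so the Jacobian has eigenvalues `-1` and `2/7` (twice).
-/

open Polynomial

section Competition

variable {ι : Type*} [Fintype ι]

theorem hasFDerivAt_competition_component (c : ι → ℝ) (i : ι) (m₀ : ι → ℝ) :
    HasFDerivAt (fun m : ι → ℝ => m i * (1 - ∑ j, c j * m j))
      (m₀ i • (-∑ j, c j • ContinuousLinearMap.proj (R := ℝ) (φ := fun _ : ι => ℝ) j) +
        (1 - ∑ j, c j * m₀ j) • ContinuousLinearMap.proj i) m₀ := by
  have hsum : HasFDerivAt (fun m : ι → ℝ => ∑ j, c j * m j)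
      (∑ j, c j • ContinuousLinearMap.proj (R := ℝ) (φ := fun _ : ι => ℝ) j) m₀ :=
    HasFDerivAt.fun_sum fun j _ => (hasFDerivAt_apply j m₀).const_smul (c j)
  exact (hasFDerivAt_apply i m₀).mul ((hasFDerivAt_const 1 m₀).sub hsum |>.congr_fderiv (zero_sub _))

theorem fderiv_competition_component_single_of_sum_eq_one [DecidableEq ι] (c : ι → ℝ) (i j : ι)
    {m₀ : ι → ℝ} (h : ∑ k, c k * m₀ k = 1) :
    fderiv ℝ (fun m : ι → ℝ => m i * (1 - ∑ k, c k * m k)) m₀ (Pi.single j 1) = -(m₀ i * c j) := by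
  rw [(hasFDerivAt_competition_component c i m₀).fderiv, h]
  simp [Pi.single_apply]

end Competition

theorem Matrix.charpoly_fin_three_of_diag_offDiag {R : Type*} [CommRing R] (d e : R) :
    (Matrix.of fun i j : Fin 3 => if i = j then d else e).charpoly =
      (X - C (d + 2 * e)) * (X - C (d - e)) ^ 2 := by
  simp only [Matrix.charpoly, Matrix.det_fin_three, Matrix.charmatrix_apply_eq,
    Matrix.charmatrix_apply_ne, Matrix.of_apply, ne_eq, Fin.reduceEq, not_false_eq_true, ↓reduceIte,
    map_add, map_sub, map_mul, map_ofNat]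
  ring

/-- At the coexistence equilibrium (1/7, 1/7, 1/7) of the three-species segregation
kinetics (a_{ii} = 1, a_{ij} = 3 for i ≠ j), the Jacobian has diagonal entries −1/7 and
off-diagonal entries −3/7, its characteristic polynomial is (X + 1)(X − 2/7)², and 2/7
is a positive eigenvalue, so the equilibrium is not linearly stable. -/
theorem segregation_jacobian_coexistence_equilibrium
    (a : Fin 3 → Fin 3 → ℝ) (ha : ∀ i j, a i j = if i = j then 1 else 3)
    (F : Fin 3 → (Fin 3 → ℝ) → ℝ)
    (hF : ∀ i m, F i m = m i * (1 - ∑ j, a i j * m j))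
    (m₀ : Fin 3 → ℝ) (hm₀ : m₀ = ![1/7, 1/7, 1/7])
    (J : Matrix (Fin 3) (Fin 3) ℝ)
    (hJ : ∀ i j, J i j = fderiv ℝ (F i) m₀ (Pi.single j 1)) :
    (∀ i j, J i j = if i = j then -1/7 else -3/7) ∧
    J.charpoly = (X + 1) * (X - C (2/7)) ^ 2 ∧
    (2/7 : ℝ) ∈ spectrum ℝ J ∧ (0 : ℝ) < 2/7 := by
  subst hm₀
  have hF' : F = fun i m => m i * (1 - ∑ j, a i j * m j) := funext₂ hF
  subst hF'
  have hequilibrium : ∀ i, ∑ j, a i j * ![1/7, 1/7, 1/7] j = (1 : ℝ) := by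
    intro i; fin_cases i <;> simp [Fin.sum_univ_three, ha] <;> norm_num
  have hentries : ∀ i j, J i j = if i = j then -1/7 else -3/7 := by
    intro i j
    rw [hJ, fderiv_competition_component_single_of_sum_eq_one _ i j (hequilibrium i), ha]
    fin_cases i <;> split_ifs <;> norm_num
  have hcharpoly : J.charpoly = (X + 1) * (X - C (2/7)) ^ 2 := by
    rw [show J = Matrix.of fun i j => if i = j then -1/7 else -3/7 from Matrix.ext hentries,
      Matrix.charpoly_fin_three_of_diag_offDiag]
    norm_num
  refine ⟨hentries, hcharpoly, Matrix.mem_spectrum_of_isRoot_charpoly ?_, by norm_num⟩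
  simp [hcharpoly]
end
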